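/- Preservation of well-typedness under parallel reduction (first part of Theorem 1): Let σ denote the map on RedPL statements that replaces every par-reduce(s1, s2) node by seq(σ(s1), σ(s2)) and acts homomorphically on all other constructors. For every statement s and every set l of local variables, well-typed(s, l) implies well-typed(σ(s), l). Consequently, if a program P (a map from procedure names to statements) is well-typed, then the program Q ↦ σ(P(Q)) is well-typed. -/
import Mathlib


/-- Mover types: both-mover, right-mover, left-mover, non-mover, and top. -/
inductive MoverType where
  | B | R | L | N | top
deriving DecidableEq

namespace MoverType

/-- The partial order on mover types: `B ⊑ R ⊑ N ⊑ ⊤` and `B ⊑ L ⊑ N ⊑ ⊤`,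
with `R` and `L` incomparable. -/
def sqle : MoverType → MoverType → Prop
  | .B, _ => True
  | _, .top => True
  | .R, .R => True
  | .R, .N => True
  | .L, .L => True
  | .L, .N => True
  | .N, .N => True
  | _, _ => False

/-- The join operation for the partial order on mover types. -/
def join : MoverType → MoverType → MoverType
  | .B, m => m
  | m, .B => m
  | .top, _ => .top
  | _, .top => .top
  | .R, .R => .R
  | .L, .L => .L
  | .R, .L => .N
  | .L, .R => .N
  | .N, _ => .N
  | _, .N => .N

/-- Sequential composition of mover types. -/
def comp : MoverType → MoverType → MoverType
  | .B, m => m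
  | m, .B => m
  | .top, _ => .top
  | _, .top => .top
  | .R, .R => .R
  | .R, .L => .N
  | .R, .N => .N
  | .L, .L => .L
  | .L, .R => .top
  | .L, .N => .top
  | .N, .L => .N
  | .N, .R => .top
  | .N, .N => .top

end MoverType

/-- RedPL statements, over a type `Nm` of action/procedure names and a type `V`
of local variables. A call carries input and output maps between local variables. -/
inductive Stmt (Nm V : Type) where
  | skip
  | ite (x : V) (s1 s2 : Stmt Nm V)
  | seq (s1 s2 : Stmt Nm V)
  | par (s1 s2 : Stmt Nm V)
  | call (X : Nm) (ι o : V → Option V)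
  | atomic (s : Stmt Nm V)
  | parReduce (s1 s2 : Stmt Nm V)
  | seqReduce (s : Stmt Nm V)

/-- The image of an input/output map: the set of caller variables it uses. -/
def img {V : Type} (f : V → Option V) : Set V := {v | ∃ u, f u = some v}

variable {Nm V : Type}

/-- `modSet s`: the set of local variables that may be modified by `s`. -/
def modSet : Stmt Nm V → Set V
  | .skip => ∅
  | .call _ _ o => img o
  | .ite _ s1 s2 => modSet s1 ∪ modSet s2
  | .seq s1 s2 => modSet s1 ∪ modSet s2
  | .par s1 s2 => modSet s1 ∪ modSet s2
  | .parReduce s1 s2 => modSet s1 ∪ modSet s2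
  | .atomic s => modSet s
  | .seqReduce s => modSet s

/-- `mayFail F s`: whether `s` may fail, given the failure flags `F` of names. -/
def mayFail (F : Nm → Prop) : Stmt Nm V → Prop
  | .skip => False
  | .call X _ _ => F X
  | .ite _ s1 s2 => mayFail F s1 ∨ mayFail F s2
  | .seq s1 s2 => mayFail F s1 ∨ mayFail F s2
  | .par s1 s2 => mayFail F s1 ∨ mayFail F s2
  | .parReduce s1 s2 => mayFail F s1 ∨ mayFail F s2
  | .atomic s => mayFail F s
  | .seqReduce s => mayFail F s

/-- `moverType M s`: the mover type of `s`, given the mover types `M` of names. -/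
def moverType (M : Nm → MoverType) : Stmt Nm V → MoverType
  | .skip => .B
  | .par _ _ => .top
  | .call X _ _ => M X
  | .atomic s => moverType M s
  | .seqReduce s => moverType M s
  | .parReduce s1 s2 => MoverType.comp (moverType M s1) (moverType M s2)
  | .seq s1 s2 => MoverType.comp (moverType M s1) (moverType M s2)
  | .ite _ s1 s2 => MoverType.join (moverType M s1) (moverType M s2)

/-- `wellTyped M F s l`: `s` is well-typed w.r.t. the set `l` of local variables. -/
def wellTyped (M : Nm → MoverType) (F : Nm → Prop) : Stmt Nm V → Set V → Prop
  | .skip, _ => True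
  | .atomic s, l => wellTyped M F s l
  | .call _ ι o, l => img ι ⊆ l ∧ img o ⊆ l
  | .ite x s1 s2, l => wellTyped M F s1 l ∧ wellTyped M F s2 l ∧ x ∈ l
  | .seq s1 s2, l => wellTyped M F s1 l ∧ wellTyped M F s2 l
  | .par s1 s2, l => wellTyped M F s1 (l \ modSet s2) ∧ wellTyped M F s2 (l \ modSet s1)
  | .seqReduce s, l => wellTyped M F s l ∧ MoverType.sqle (moverType M s) .N
  | .parReduce s1 s2, l =>
      wellTyped M F s1 (l \ modSet s2) ∧ wellTyped M F s2 (l \ modSet s1) ∧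
      (MoverType.sqle (moverType M s1) .L ∨
        (MoverType.sqle (moverType M s2) .R ∧ ¬ mayFail F s2))

/-- A program `P` is well-typed if the body of every procedure is well-typed
w.r.t. all local variables, has a mover type stronger than its declared mover
type, and its may-fail analysis is approximated by its declared failure flag. -/
def progWellTyped (M : Nm → MoverType) (F : Nm → Prop) (P : Nm → Stmt Nm V) : Prop :=
  ∀ Q : Nm, wellTyped M F (P Q) Set.univ ∧
    MoverType.sqle (moverType M (P Q)) (M Q) ∧
    (mayFail F (P Q) → F Q)

/-- The parallel-reduction map `σ`: replaces every `par-reduce(s1, s2)` node by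
`seq(σ(s1), σ(s2))` and acts homomorphically on all other constructors. -/
def parRed : Stmt Nm V → Stmt Nm V
  | .skip => .skip
  | .ite x s1 s2 => .ite x (parRed s1) (parRed s2)
  | .seq s1 s2 => .seq (parRed s1) (parRed s2)
  | .par s1 s2 => .par (parRed s1) (parRed s2)
  | .call X ι o => .call X ι o
  | .atomic s => .atomic (parRed s)
  | .parReduce s1 s2 => .seq (parRed s1) (parRed s2)
  | .seqReduce s => .seqReduce (parRed s)

lemma modSet_parRed (s : Stmt Nm V) : modSet (parRed s) = modSet s := by
  induction s <;> simp [parRed, modSet, *]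

lemma mayFail_parRed (F : Nm → Prop) (s : Stmt Nm V) :
    mayFail F (parRed s) ↔ mayFail F s := by
  induction s <;> simp [parRed, mayFail, *]

lemma moverType_parRed (M : Nm → MoverType) (s : Stmt Nm V) :
    moverType M (parRed s) = moverType M s := by
  induction s <;> simp [parRed, moverType, *]

lemma wellTyped_mono (M : Nm → MoverType) (F : Nm → Prop) (s : Stmt Nm V) :
    ∀ l l' : Set V, l ⊆ l' → wellTyped M F s l → wellTyped M F s l' := by
  induction s with
  | skip => intro l l' h hw; trivial
  | ite x s1 s2 ih1 ih2 =>
      intro l l' h hw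
      exact ⟨ih1 l l' h hw.1, ih2 l l' h hw.2.1, h hw.2.2⟩
  | seq s1 s2 ih1 ih2 =>
      intro l l' h hw; exact ⟨ih1 l l' h hw.1, ih2 l l' h hw.2⟩
  | par s1 s2 ih1 ih2 =>
      intro l l' h hw
      exact ⟨ih1 _ _ (Set.diff_subset_diff_left h) hw.1,
        ih2 _ _ (Set.diff_subset_diff_left h) hw.2⟩
  | call X ι o =>
      intro l l' h hw; exact ⟨hw.1.trans h, hw.2.trans h⟩
  | atomic s ih => intro l l' h hw; exact ih l l' h hw
  | parReduce s1 s2 ih1 ih2 =>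
      intro l l' h hw
      exact ⟨ih1 _ _ (Set.diff_subset_diff_left h) hw.1,
        ih2 _ _ (Set.diff_subset_diff_left h) hw.2.1, hw.2.2⟩
  | seqReduce s ih =>
      intro l l' h hw; exact ⟨ih l l' h hw.1, hw.2⟩

lemma wellTyped_parRed_stmt (M : Nm → MoverType) (F : Nm → Prop) (s : Stmt Nm V) :
    ∀ l : Set V, wellTyped M F s l → wellTyped M F (parRed s) l := by
  induction s with
  | skip => intro l h; trivial
  | ite x s1 s2 ih1 ih2 =>
      intro l h; exact ⟨ih1 l h.1, ih2 l h.2.1, h.2.2⟩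
  | seq s1 s2 ih1 ih2 =>
      intro l h; exact ⟨ih1 l h.1, ih2 l h.2⟩
  | par s1 s2 ih1 ih2 =>
      intro l h
      refine ⟨?_, ?_⟩
      · rw [modSet_parRed]; exact ih1 _ h.1
      · rw [modSet_parRed]; exact ih2 _ h.2
  | call X ι o => intro l h; exact h
  | atomic s ih => intro l h; exact ih l h
  | parReduce s1 s2 ih1 ih2 =>
      intro l h
      exact ⟨wellTyped_mono M F _ _ _ Set.diff_subset (ih1 _ h.1),
        wellTyped_mono M F _ _ _ Set.diff_subset (ih2 _ h.2.1)⟩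
  | seqReduce s ih =>
      intro l h
      exact ⟨ih l h.1, by rw [moverType_parRed]; exact h.2⟩

/-- Preservation of well-typedness under parallel reduction: well-typedness of a
statement is preserved by `σ`, and consequently well-typedness of a program is
preserved by applying `σ` to every procedure body. -/
theorem wellTyped_parRed (M : Nm → MoverType) (F : Nm → Prop) :
    (∀ (s : Stmt Nm V) (l : Set V), wellTyped M F s l → wellTyped M F (parRed s) l) ∧
    (∀ P : Nm → Stmt Nm V, progWellTyped M F P →
      progWellTyped M F (fun Q => parRed (P Q))) := by
  refine ⟨wellTyped_parRed_stmt M F, ?_⟩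
  intro P hP Q
  obtain ⟨h1, h2, h3⟩ := hP Q
  refine ⟨wellTyped_parRed_stmt M F _ _ h1, ?_, ?_⟩
  · rw [moverType_parRed]; exact h2
  · rw [mayFail_parRed]; exact h3
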